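/- arXiv:1402.4506 — 5 statements merged into one kernel-verified Lean document; each statement's English description precedes it below -/
import Mathlib

section
/- Let k be a field and let L = FractionRing (MvPolynomial (Fin 3) k) = k(x,y,z) with variables x, y, z. Suppose f, g : L → L are k-linear maps satisfying, for all v ∈ L: g(v) = f(v), g(x·v) = x·f(v), g(y·v) = y·f(v), and g(z·v) = z·f(v). Then there exists c ∈ L such that f(v) = c·v and g(v) = c·v for all v ∈ L. -/
/-- The image of the variable `X i` in the rational function field `k(x, y, z)`,
realized as the fraction field of the polynomial ring `k[x, y, z]`. -/
noncomputable def genVar (k : Type) [Field k] (i : Fin 3) :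
    FractionRing (MvPolynomial (Fin 3) k) :=
  algebraMap (MvPolynomial (Fin 3) k) (FractionRing (MvPolynomial (Fin 3) k))
    (MvPolynomial.X i)

/-!
Since `g = f`, the hypotheses say that `f` commutes with multiplication by `x`, `y` and `z`. These
generate `k[x, y, z]` as a `k`-algebra, so `f` is `k[x, y, z]`-linear, and hence `L`-linear
since `L` is a localization of `k[x, y, z]`. An `L`-linear endomorphism of `L` is
multiplication by `f 1`.
-/

section AdjoinEqTop

variable {k A M N : Type*} [CommSemiring k] [Semiring A] [Algebra k A]
  [AddCommMonoid M] [Module k M] [Module A M] [IsScalarTower k A M]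
  [AddCommMonoid N] [Module k N] [Module A N] [IsScalarTower k A N]

theorem LinearMap.map_smul_of_adjoin_eq_top {s : Set A} (hs : Algebra.adjoin k s = ⊤)
    (f : M →ₗ[k] N) (hf : ∀ a ∈ s, ∀ v, f (a • v) = a • f v) (a : A) (v : M) :
    f (a • v) = a • f v := by
  have ha : a ∈ Algebra.adjoin k s := hs ▸ Algebra.mem_top
  induction ha using Algebra.adjoin_induction generalizing v with
  | mem a ha => exact hf a ha v
  | algebraMap r => simp only [algebraMap_smul, map_smul]
  | add a b _ _ ha hb => rw [add_smul, map_add, ha, hb, add_smul]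
  | mul a b _ _ ha hb => rw [mul_smul, ha, hb, mul_smul]

def LinearMap.extendScalarsOfAdjoinEqTop {s : Set A} (hs : Algebra.adjoin k s = ⊤)
    (f : M →ₗ[k] N) (hf : ∀ a ∈ s, ∀ v, f (a • v) = a • f v) : M →ₗ[A] N where
  toFun := f
  map_add' := f.map_add
  map_smul' := f.map_smul_of_adjoin_eq_top hs hf

end AdjoinEqTop

theorem MvPolynomial.map_eq_mul_of_commute_X {σ k S : Type*} [CommRing k] [CommRing S]
    [Algebra k S] [Algebra (MvPolynomial σ k) S] [IsScalarTower k (MvPolynomial σ k) S]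
    (P : Submonoid (MvPolynomial σ k)) [IsLocalization P S] (f : S →ₗ[k] S)
    (hf : ∀ i v, f ((X i : MvPolynomial σ k) • v) = (X i : MvPolynomial σ k) • f v)
    (v : S) : f v = f 1 * v := by
  have hX : ∀ a ∈ Set.range (X : σ → MvPolynomial σ k), ∀ v, f (a • v) = a • f v :=
    Set.forall_mem_range.2 hf
  let F : S →ₗ[S] S :=
    (f.extendScalarsOfAdjoinEqTop (adjoin_range_X (R := k)) hX).extendScalarsOfIsLocalization P S
  calc f v = F (v • 1) := by rw [smul_eq_mul, mul_one]; rfl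
    _ = f 1 * v := by rw [map_smul, smul_eq_mul, mul_comm]; rfl

/-- Let `L = k(x, y, z)`.  If `f, g : L → L` are `k`-linear maps such that
`g v = f v`, `g (x * v) = x * f v`, `g (y * v) = y * f v` and `g (z * v) = z * f v`
for all `v ∈ L`, then there is a `c ∈ L` with `f v = c * v` and `g v = c * v`
for all `v`. -/
theorem endomorphism_of_kronecker_generic_rep (k : Type) [Field k]
    (f g : FractionRing (MvPolynomial (Fin 3) k) →ₗ[k] FractionRing (MvPolynomial (Fin 3) k))
    (h1 : ∀ v, g v = f v)
    (hx : ∀ v, g (genVar k 0 * v) = genVar k 0 * f v)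
    (hy : ∀ v, g (genVar k 1 * v) = genVar k 1 * f v)
    (hz : ∀ v, g (genVar k 2 * v) = genVar k 2 * f v) :
    ∃ c : FractionRing (MvPolynomial (Fin 3) k),
      (∀ v, f v = c * v) ∧ (∀ v, g v = c * v) := by
  have hf : ∀ i v, f ((MvPolynomial.X i : MvPolynomial (Fin 3) k) • v) =
      (MvPolynomial.X i : MvPolynomial (Fin 3) k) • f v := by
    intro i v
    rw [Algebra.smul_def, Algebra.smul_def, ← h1]
    fin_cases i
    exacts [hx v, hy v, hz v]
  have hmul := MvPolynomial.map_eq_mul_of_commute_X (nonZeroDivisors _) f hf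
  exact ⟨f 1, hmul, fun v => (h1 v).trans (hmul v)⟩
end

section
/- Let Q be a finite quiver. If β : Q₀ → ℤ satisfies β i ≥ 1 for every vertex i and (e_i, β) ≤ −1 for every vertex i, then (β, β) ≤ −∑_{i∈Q₀} β i. -/
/-- The symmetrized Euler (Tits) form of a finite quiver with vertex set `V`,
arrow set `E`, and head and tail maps `h t : E → V`. -/
def titsForm {V E : Type} [Fintype V] [Fintype E] (h t : E → V) (α β : V → ℤ) : ℤ :=
  2 * ∑ i, α i * β i - ∑ a, (α (t a) * β (h a) + α (h a) * β (t a))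

/-- The coordinate vector `e_i`. -/
def unitVec {V : Type} [DecidableEq V] (i : V) : V → ℤ := fun j => if j = i then 1 else 0

lemma titsForm_expand {V E : Type} [Fintype V] [Fintype E] [DecidableEq V]
    (h t : E → V) (β : V → ℤ) :
    titsForm h t β β = ∑ i, β i * titsForm h t (unitVec i) β := by
  simp only [titsForm, unitVec, mul_sub, mul_comm, Finset.mul_sum, Finset.sum_sub_distrib,
    mul_ite, ite_mul, one_mul, zero_mul, mul_one, mul_zero]
  congr 1
  · refine Finset.sum_congr rfl fun i _ => ?_
    rw [Finset.sum_ite_eq' Finset.univ i (fun j => β i * (β j * 2))]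
    simp; ring
  · rw [Finset.sum_comm]
    apply Finset.sum_congr rfl
    intro a _
    simp [mul_add, Finset.sum_add_distrib, mul_ite, mul_zero, Finset.sum_ite_eq']
    ring

/-- If `β i ≥ 1` for every vertex `i` and `(e_i, β) ≤ -1` for every vertex `i`, then
`(β, β) ≤ -∑ i, β i`. -/
theorem titsForm_self_le_neg_sum {V E : Type} [Fintype V] [Fintype E] [DecidableEq V]
    (h t : E → V) (β : V → ℤ)
    (hβ : ∀ i, 1 ≤ β i) (hneg : ∀ i, titsForm h t (unitVec i) β ≤ -1) :
    titsForm h t β β ≤ -∑ i, β i := by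
  rw [titsForm_expand, ← Finset.sum_neg_distrib]
  apply Finset.sum_le_sum
  intro i _
  calc β i * titsForm h t (unitVec i) β ≤ β i * (-1) := by
        exact mul_le_mul_of_nonneg_left (hneg i) (by linarith [hβ i])
    _ = -β i := by ring
end

section
/- Let Q be a finite quiver and let N be a natural number. Then the set of all β : Q₀ → ℤ such that β i ≥ 1 for every vertex i, (e_i, β) ≤ −1 for every vertex i, and (β, β) ≥ −N, is a finite set. -/
/-- For any natural number `N`, the set of `β : V → ℤ` with `β i ≥ 1` for all `i`,
`(e_i, β) ≤ -1` for all `i`, and `(β, β) ≥ -N` is finite. -/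
theorem finite_titsForm_bounded {V E : Type} [Fintype V] [Fintype E] [DecidableEq V]
    (h t : E → V) (N : ℕ) :
    {β : V → ℤ | (∀ i, 1 ≤ β i) ∧ (∀ i, titsForm h t (unitVec i) β ≤ -1) ∧
      -(N : ℤ) ≤ titsForm h t β β}.Finite := by
  have hbox : (Set.pi Set.univ fun _ : V => Set.Icc (1 : ℤ) N).Finite :=
    Set.Finite.pi fun _ => Set.finite_Icc _ _
  refine hbox.subset ?_
  rintro β ⟨h1, h2, h3⟩ i _
  have hsum : (∑ j, β j) ≤ N := by
    have hkey : titsForm h t β β ≤ -∑ j, β j := by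
      rw [titsForm_expand, ← Finset.sum_neg_distrib]
      apply Finset.sum_le_sum
      intro j _
      have := h2 j
      nlinarith [h1 j]
    linarith
  have hle : β i ≤ ∑ j, β j := by
    apply Finset.single_le_sum (f := β) (fun j _ => by linarith [h1 j]) (Finset.mem_univ i)
  exact ⟨h1 i, by linarith⟩
end

section
/- Let Q be a finite quiver whose vertex set Q₀ has at least two elements, and suppose there exists α : Q₀ → ℤ with α i ≥ 1 for every vertex i and (e_i, α) ≤ −1 for every vertex i. Then the set of all β : Q₀ → ℤ such that β i ≥ 1 for every i, (e_i, β) ≤ −1 for every i, and the greatest common divisor of the values {β i : i ∈ Q₀} equals 1, is an infinite set. -/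
/-!
Take `β = N • α + e_{i₀}` with `N ≥ 3`. Since `(e_i, e_j) ≤ 2`, linearity gives
`(e_i, β) ≤ -N + 2 ≤ -1`. If moreover `N` is a multiple of `α j₀` for some vertex `j₀ ≠ i₀`, then
`β i₀ = N α i₀ + 1` is coprime to `β j₀ = N α j₀`, so `β` is indivisible. The multiples
`N = (n + 3) α j₀` give infinitely many distinct such `β`.
-/

section TitsForm

variable {V E : Type} [Fintype V] [Fintype E] (h t : E → V)

theorem titsForm_add_right (α β γ : V → ℤ) :
    titsForm h t α (β + γ) = titsForm h t α β + titsForm h t α γ := by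
  simp only [titsForm, Pi.add_apply, mul_add, Finset.sum_add_distrib]
  ring

theorem titsForm_smul_right (α β : V → ℤ) (c : ℤ) :
    titsForm h t α (c • β) = c * titsForm h t α β := by
  simp only [titsForm, Pi.smul_apply, smul_eq_mul, mul_sub, Finset.mul_sum]
  congr 1 <;> exact Finset.sum_congr rfl fun _ _ => by ring

variable [DecidableEq V]

theorem titsForm_unitVec_unitVec_le (i j : V) : titsForm h t (unitVec i) (unitVec j) ≤ 2 := by
  have hdiag : ∑ k, unitVec i k * unitVec j k ≤ 1 :=
    calc ∑ k, unitVec i k * unitVec j k ≤ ∑ k, unitVec i k :=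
          Finset.sum_le_sum fun k _ => by unfold unitVec; split_ifs <;> norm_num
      _ = 1 := by simp [unitVec]
  have harrows :
      0 ≤ ∑ a, (unitVec i (t a) * unitVec j (h a) + unitVec i (h a) * unitVec j (t a)) :=
    Finset.sum_nonneg fun a _ => by unfold unitVec; split_ifs <;> norm_num
  unfold titsForm
  linarith

theorem titsForm_unitVec_smul_add_unitVec_le {α : V → ℤ} {N : ℤ} {i : V}
    (hα : titsForm h t (unitVec i) α ≤ -1) (hN : 3 ≤ N) (j : V) :
    titsForm h t (unitVec i) (N • α + unitVec j) ≤ -1 := by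
  rw [titsForm_add_right, titsForm_smul_right]
  nlinarith [titsForm_unitVec_unitVec_le h t i j]

end TitsForm

theorem Finset.gcd_eq_one_of_isCoprime {ι R : Type*} [CommRing R] [IsDomain R]
    [NormalizedGCDMonoid R] {s : Finset ι} {f : ι → R} {i j : ι} (hi : i ∈ s) (hj : j ∈ s)
    (hij : IsCoprime (f i) (f j)) : s.gcd f = 1 := by
  rw [← s.normalize_gcd, normalize_eq_one]
  exact hij.isUnit_of_dvd' (Finset.gcd_dvd hi) (Finset.gcd_dvd hj)

theorem isCoprime_mul_add_one_mul_of_dvd {R : Type*} [CommRing R] {N a : R} (b : R) (ha : a ∣ N) :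
    IsCoprime (N * b + 1) (N * a) := by
  have hN : IsCoprime (N * b + 1) N := ⟨1, -b, by ring⟩
  exact hN.mul_right (hN.of_isCoprime_of_dvd_right ha)

/-- If the quiver has at least two vertices and the interior of the cone `C(Q)` contains a
lattice point, then it contains infinitely many indivisible lattice points. -/
theorem infinite_indivisible_interior {V E : Type} [Fintype V] [Fintype E] [DecidableEq V]
    (h t : E → V) (hV : 1 < Fintype.card V)
    (α : V → ℤ) (hα : ∀ i, 1 ≤ α i) (hαneg : ∀ i, titsForm h t (unitVec i) α ≤ -1) :
    {β : V → ℤ | (∀ i, 1 ≤ β i) ∧ (∀ i, titsForm h t (unitVec i) β ≤ -1) ∧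
      Finset.univ.gcd β = 1}.Infinite := by
  obtain ⟨i₀, j₀, hij⟩ := Fintype.exists_pair_of_one_lt_card hV
  set N : ℕ → ℤ := fun n => (n + 3) * α j₀
  have hN : ∀ n, 3 ≤ N n := fun n => by
    nlinarith [hα j₀, (Nat.cast_nonneg n : (0 : ℤ) ≤ n)]
  have hα₀ : α ≠ 0 := fun h0 => by simpa [h0] using hα j₀
  refine Set.infinite_of_injective_forall_mem (f := fun n => N n • α + unitVec i₀) ?_ fun n => ?_
  · exact (add_left_injective _).comp ((smul_left_injective ℤ hα₀).comp
      ((mul_left_injective₀ (by linarith [hα j₀])).comp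
        ((add_left_injective _).comp Nat.cast_injective)))
  refine ⟨fun k => ?_, fun i => titsForm_unitVec_smul_add_unitVec_le h t (hαneg i) (hN n) i₀, ?_⟩
  · have : N n * 1 ≤ N n * α k := mul_le_mul_of_nonneg_left (hα k) (by linarith [hN n])
    simp only [Pi.add_apply, Pi.smul_apply, smul_eq_mul, unitVec]
    split_ifs <;> linarith [hN n]
  · refine Finset.gcd_eq_one_of_isCoprime (Finset.mem_univ i₀) (Finset.mem_univ j₀) ?_
    simpa [unitVec, hij.symm] using isCoprime_mul_add_one_mul_of_dvd (α i₀) (dvd_mul_left _ _)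
end

section
/- Let K be a field of characteristic zero, let D be a finite-dimensional central division K-algebra, and let L be a maximal subfield of D. Regard D as a module over L ⊗[K] L via (l ⊗ l') • d = l·d·l' (multiplication in D). Then D is a free (L ⊗[K] L)-module of rank one; equivalently, D is isomorphic to L ⊗[K] L as an L-bimodule. -/
open TensorProduct

/-- Right multiplication along an embedding `f : L → D` of a commutative algebra into `D`,
as a `K`-algebra homomorphism `L → End_K(D)`. -/
noncomputable def rightMulAlgHom (K L D : Type) [Field K] [CommRing L] [Ring D]
    [Algebra K L] [Algebra K D] (f : L →ₐ[K] D) : L →ₐ[K] Module.End K D where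
  toFun l := LinearMap.mulRight K (f l)
  map_one' := by ext d; simp
  map_mul' l₁ l₂ := by
    ext d
    show d * f (l₁ * l₂) = d * f l₂ * f l₁
    rw [mul_comm l₁ l₂, map_mul, ← mul_assoc]
  map_zero' := by ext d; simp
  map_add' l₁ l₂ := by ext d; simp [mul_add]
  commutes' c := by
    ext d
    show d * f (algebraMap K L c) = (algebraMap K (Module.End K D) c) d
    rw [AlgHom.commutes, Module.algebraMap_end_eq_smul_id]
    simp [Algebra.smul_def, ← Algebra.commutes c d]

/-- The `K`-algebra homomorphism `L ⊗[K] L → End_K(D)` sending `l ⊗ l'` to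
`x ↦ f l * x * f l'`. -/
noncomputable def bimulAlgHom (K L D : Type) [Field K] [CommRing L] [Ring D]
    [Algebra K L] [Algebra K D] (f : L →ₐ[K] D) : (L ⊗[K] L) →ₐ[K] Module.End K D :=
  Algebra.TensorProduct.lift ((Algebra.lmul K D).comp f) (rightMulAlgHom K L D f)
    (fun x y => by
      show _ = _
      ext d
      show f x * (d * f y) = (f x * d) * f y
      rw [mul_assoc])

/-! The map `L ⊗[K] L → End_K D` factors through `D ⊗[K] Dᵐᵒᵖ → End_K D`, which is injective
for a central division algebra by an Artin-type independence argument, so `D` is a faithful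
`L ⊗[K] L`-module. In characteristic zero `L/K` is separable, so `L ⊗[K] L` is reduced and
artinian, hence semisimple, and a faithful module over a commutative semisimple ring contains an
element `d₀` with zero annihilator. Finally, under `D ⊗[K] Dᵐᵒᵖ ≃ End_K D` the subspace `End_L D`
lies in the image of `C(L) ⊗[K] Dᵐᵒᵖ`, where `C(L)` is the centralizer of `L`; this gives
`[D : K] ≤ [L : K]²` when `L` is its own centralizer, so the injection `a ↦ a • d₀` is bijective.
-/

section Independence

variable {K D : Type*} [Field K] [Ring D] [Algebra K D]

theorem sum_commutator_mul_mul {η : Type*} (s : Finset η) (a b : η → D) (c d : D) :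
    ∑ i ∈ s, (a i * c - c * a i) * d * b i
      = ∑ i ∈ s, a i * (c * d) * b i - c * ∑ i ∈ s, a i * d * b i := by
  simp only [Finset.mul_sum, ← Finset.sum_sub_distrib, sub_mul, mul_assoc]

theorem mulLeftRight_equivFinsuppOfBasisRight_symm_apply {η : Type*} [DecidableEq η]
    (b : Module.Basis η K D) (c : η →₀ D) (x : D) :
    AlgHom.mulLeftRight K D ((equivFinsuppOfBasisRight b.mulOpposite).symm c) x
      = ∑ i ∈ c.support, c i * x * b i := by
  simp [Finsupp.sum, Module.Basis.mulOpposite_apply]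

variable {D : Type*} [DivisionRing D] [Algebra K D] [Algebra.IsCentral K D]

theorem eq_zero_of_forall_sum_mul_mul_eq_zero {η : Type*} {b : η → D}
    (hb : LinearIndependent K b) (s : Finset η) (a : η → D)
    (h : ∀ d, ∑ i ∈ s, a i * d * b i = 0) : ∀ i ∈ s, a i = 0 := by
  classical
  induction s using Finset.induction_on generalizing a with
  | empty => simp
  | insert j s hj IH =>
    suffices haj : a j = 0 by
      have hs := IH a fun d => by simpa [Finset.sum_insert hj, haj] using h d
      simpa [haj] using hs
    -- Normalised so that `a' j = 1`, the commutators `[a' i, c]` satisfy a relation over `s`;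
    -- hence every `a' i` is central, and `d = 1` gives a `K`-linear relation among the `b i`.
    by_contra haj
    set a' := fun i => (a j)⁻¹ * a i with ha'
    have ha'j : a' j = 1 := inv_mul_cancel₀ haj
    have h' : ∀ d, ∑ i ∈ insert j s, a' i * d * b i = 0 := fun d => by
      simp only [ha', mul_assoc, ← Finset.mul_sum]
      simpa [mul_assoc] using congrArg ((a j)⁻¹ * ·) (h d)
    have hcentral : ∀ i ∈ insert j s, ∃ k : K, algebraMap K D k = a' i := by
      intro i hi
      refine Algebra.mem_bot.mp (Algebra.IsCentral.out (Subalgebra.mem_center_iff.mpr fun c => ?_))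
      obtain rfl | hi := Finset.mem_insert.mp hi
      · rw [ha'j, one_mul, mul_one]
      · refine (sub_eq_zero.mp (IH (fun i => a' i * c - c * a' i) (fun d => ?_) i hi)).symm
        have hcomm := sum_commutator_mul_mul (insert j s) a' b c d
        rwa [h', h', mul_zero, sub_zero, Finset.sum_insert hj, ha'j, one_mul, mul_one, sub_self,
          zero_mul, zero_mul, zero_add] at hcomm
    choose! k hk using hcentral
    have hdep : ∑ i ∈ insert j s, k i • b i = 0 := by
      rw [← h' 1]
      exact Finset.sum_congr rfl fun i hi => by rw [Algebra.smul_def, hk i hi, mul_one]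
    have hkj := linearIndependent_iff'.mp hb _ k hdep j (Finset.mem_insert_self j s)
    have := hk j (Finset.mem_insert_self j s)
    rw [hkj, map_zero, ha'j] at this
    exact zero_ne_one this

end Independence

section MulLeftRight

variable (K D : Type*) [Field K] [DivisionRing D] [Algebra K D] [Algebra.IsCentral K D]

theorem mulLeftRight_injective : Function.Injective (AlgHom.mulLeftRight K D) := by
  classical
  let b := Module.Basis.ofVectorSpace K D
  refine (injective_iff_map_eq_zero _).mpr fun t ht => ?_
  obtain ⟨c, rfl⟩ := (equivFinsuppOfBasisRight b.mulOpposite).symm.surjective t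
  suffices c = 0 by rw [this, map_zero]
  have hc := eq_zero_of_forall_sum_mul_mul_eq_zero b.linearIndependent c.support c fun x => by
    rw [← mulLeftRight_equivFinsuppOfBasisRight_symm_apply, ht, LinearMap.zero_apply]
  ext i
  by_cases hi : i ∈ c.support
  · exact hc i hi
  · exact Finsupp.notMem_support_iff.mp hi

theorem mulLeftRight_bijective [FiniteDimensional K D] :
    Function.Bijective (AlgHom.mulLeftRight K D) := by
  have hdim : Module.finrank K (D ⊗[K] Dᵐᵒᵖ) = Module.finrank K (Module.End K D) := by
    rw [Module.finrank_tensorProduct, MulOpposite.finrank, Module.finrank_linearMap]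
  exact ⟨mulLeftRight_injective K D,
    (LinearMap.injective_iff_surjective_of_finrank_eq_finrank hdim
      (f := (AlgHom.mulLeftRight K D).toLinearMap)).mp (mulLeftRight_injective K D)⟩

end MulLeftRight

section Centralizer

variable {K D : Type*} [Field K] [DivisionRing D] [Algebra K D] [Algebra.IsCentral K D]
  [FiniteDimensional K D]

theorem mem_range_mulLeftRight_centralizer_of_commute (S : Set D) (F : Module.End K D)
    (hF : ∀ s ∈ S, ∀ x, F (s * x) = s * F x) :
    F ∈ LinearMap.range ((AlgHom.mulLeftRight K D).toLinearMap ∘ₗ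
      (Subalgebra.centralizer K S).val.toLinearMap.rTensor Dᵐᵒᵖ) := by
  classical
  let b := Module.Basis.ofVectorSpace K D
  obtain ⟨t, rfl⟩ := (mulLeftRight_bijective K D).2 F
  obtain ⟨c, rfl⟩ := (equivFinsuppOfBasisRight b.mulOpposite).symm.surjective t
  simp only [mulLeftRight_equivFinsuppOfBasisRight_symm_apply] at hF
  have hc : ∀ i, c i ∈ Subalgebra.centralizer K S := by
    intro i
    by_cases hi : i ∈ c.support
    · refine (Subalgebra.mem_centralizer_iff K).mpr fun s hs => ?_
      have hcomm := eq_zero_of_forall_sum_mul_mul_eq_zero b.linearIndependent c.support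
        (fun i => c i * s - s * c i) fun x => by
          rw [sum_commutator_mul_mul, hF s hs x, sub_self]
      exact (sub_eq_zero.mp (hcomm i hi)).symm
    · rw [Finsupp.notMem_support_iff.mp hi]; exact zero_mem _
  refine ⟨∑ i ∈ c.support, (⟨c i, hc i⟩ : Subalgebra.centralizer K S) ⊗ₜ b.mulOpposite i, ?_⟩
  simp [equivFinsuppOfBasisRight_symm_apply, Finsupp.sum]

end Centralizer

section MaximalSubfield

variable {K L D : Type*} [Field K] [Field L] [DivisionRing D] [Algebra K L] [Algebra K D]
  [Algebra.IsCentral K D] [FiniteDimensional K D]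

theorem finrank_le_mul_finrank_centralizer_range (ι : L →ₐ[K] D) :
    Module.finrank K D ≤
      Module.finrank K L * Module.finrank K (Subalgebra.centralizer K (ι.range : Set D)) := by
  set C := Subalgebra.centralizer K (ι.range : Set D)
  let _ : Module L D := Module.compHom D ι.toRingHom
  have : IsScalarTower K L D :=
    ⟨fun k l x => show ι (k • l) * x = k • (ι l * x) by rw [map_smul, smul_mul_assoc]⟩
  have : FiniteDimensional K L := .of_injective ι.toLinearMap ι.injective
  have : FiniteDimensional L D := .right K L D
  have hrange : LinearMap.range (LinearMap.restrictScalarsₗ K L D D K) ≤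
      LinearMap.range
        ((AlgHom.mulLeftRight K D).toLinearMap ∘ₗ C.val.toLinearMap.rTensor Dᵐᵒᵖ) := by
    rintro _ ⟨f, rfl⟩
    refine mem_range_mulLeftRight_centralizer_of_commute _ _ ?_
    rintro _ ⟨l, rfl⟩ x
    exact f.map_smul l x
  have hle : Module.finrank L D * Module.finrank K D ≤ Module.finrank K C * Module.finrank K D := by
    calc Module.finrank L D * Module.finrank K D = Module.finrank K (D →ₗ[L] D) :=
          (Module.finrank_linearMap L K D D).symm
      _ = Module.finrank K (LinearMap.range (LinearMap.restrictScalarsₗ K L D D K)) :=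
          (LinearMap.finrank_range_of_inj (LinearMap.restrictScalars_injective K)).symm
      _ ≤ _ := Submodule.finrank_mono hrange
      _ ≤ Module.finrank K (C ⊗[K] Dᵐᵒᵖ) := LinearMap.finrank_range_le _
      _ = Module.finrank K C * Module.finrank K D := by
          rw [Module.finrank_tensorProduct, MulOpposite.finrank]
  calc Module.finrank K D = Module.finrank K L * Module.finrank L D :=
        (Module.finrank_mul_finrank K L D).symm
    _ ≤ Module.finrank K L * Module.finrank K C :=
        Nat.mul_le_mul_left _ (Nat.le_of_mul_le_mul_right hle Module.finrank_pos)

theorem finrank_le_finrank_mul_finrank_of_centralizer_range_eq (ι : L →ₐ[K] D)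
    (hmax : Subalgebra.centralizer K (ι.range : Set D) = ι.range) :
    Module.finrank K D ≤ Module.finrank K L * Module.finrank K L := by
  have h := finrank_le_mul_finrank_centralizer_range ι
  rwa [hmax, (AlgEquiv.ofInjective ι ι.injective).symm.toLinearEquiv.finrank_eq] at h

end MaximalSubfield

section Bimul

variable {K L D : Type} [Field K] [CommRing L] [DivisionRing D] [Algebra K L] [Algebra K D]

theorem bimulAlgHom_eq_mulLeftRight_comp (ι : L →ₐ[K] D) :
    bimulAlgHom K L D ι = (AlgHom.mulLeftRight K D).comp
      (Algebra.TensorProduct.map ι (ι.toOpposite fun x y => (Commute.all x y).map ι)) := by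
  ext <;> simp [bimulAlgHom, rightMulAlgHom]

theorem bimulAlgHom_injective [Algebra.IsCentral K D] (ι : L →ₐ[K] D)
    (hι : Function.Injective ι) : Function.Injective (bimulAlgHom K L D ι) := by
  rw [bimulAlgHom_eq_mulLeftRight_comp, AlgHom.coe_comp]
  refine (mulLeftRight_injective K D).comp (TensorProduct.map_injective_of_flat_flat _ _ hι ?_)
  exact MulOpposite.op_injective.comp hι

end Bimul

theorem isSemisimpleRing_tensorProduct_self_of_isSeparable (K L : Type*) [Field K] [Field L]
    [Algebra K L] [FiniteDimensional K L] [Algebra.IsSeparable K L] :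
    IsSemisimpleRing (L ⊗[K] L) :=
  have : Algebra.FormallyUnramified K L := .of_isSeparable K L
  have : Algebra.FormallyUnramified K (L ⊗[K] L) := .comp K L (L ⊗[K] L)
  have : IsReduced (L ⊗[K] L) := Algebra.FormallyUnramified.isReduced_of_field K (L ⊗[K] L)
  have : IsArtinianRing (L ⊗[K] L) := isArtinian_of_tower K inferInstance
  IsArtinianRing.isSemisimpleRing_of_isReduced (L ⊗[K] L)

theorem exists_ker_toSpanSingleton_eq_bot_of_faithfulSMul (A M : Type*) [CommRing A]
    [IsSemisimpleRing A] [AddCommGroup M] [Module A M] [FaithfulSMul A M] :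
    ∃ m : M, LinearMap.ker (LinearMap.toSpanSingleton A M m) = ⊥ := by
  obtain ⟨_, ⟨m₀, rfl⟩, hmin⟩ := IsArtinian.set_has_minimal
    (Set.range fun m : M => LinearMap.ker (LinearMap.toSpanSingleton A M m)) ⟨_, 0, rfl⟩
  obtain ⟨e, he, hspan⟩ := IsSemisimpleRing.ideal_eq_span_idempotent
    (LinearMap.ker (LinearMap.toSpanSingleton A M m₀))
  refine ⟨m₀, ?_⟩
  -- If the minimal annihilator `A ∙ e` is nonzero, `m₀ + e • m'` has a strictly smaller one.
  by_contra hne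
  have hem₀ : e • m₀ = 0 := by
    rw [← LinearMap.toSpanSingleton_apply, ← LinearMap.mem_ker, hspan]
    exact Ideal.mem_span_singleton_self e
  obtain ⟨m', hm'⟩ : ∃ m' : M, e • m' ≠ 0 := by
    by_contra! h
    refine hne (hspan.trans ?_)
    rw [FaithfulSMul.eq_of_smul_eq_smul (α := M) fun m => (h m).trans (zero_smul A m).symm]
    exact Ideal.span_singleton_eq_bot.mpr rfl
  refine hmin _ ⟨m₀ + e • m', rfl⟩ ⟨fun a ha => ?_, fun hle => hm' ?_⟩
  · rw [LinearMap.mem_ker, LinearMap.toSpanSingleton_apply] at ha ⊢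
    have hae : (a * e) • m' = 0 := by
      have := congrArg (e • ·) ha
      simp only [smul_add, smul_smul, mul_comm e a, ← smul_smul a e m₀, hem₀, smul_zero,
        zero_add] at this
      rwa [mul_left_comm, he.eq] at this
    rwa [smul_add, smul_smul, hae, add_zero] at ha
  · have := hle (hspan ▸ Ideal.mem_span_singleton_self e)
    rwa [LinearMap.mem_ker, LinearMap.toSpanSingleton_apply, smul_add, hem₀, zero_add, smul_smul,
      he.eq] at this

/-- Let `K` be a field of characteristic zero, `D` a finite-dimensional central division
`K`-algebra and `L` a maximal subfield of `D`, i.e. a field extension of `K` embedded in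
`D` by `ι` whose image is a commutative subalgebra equal to its own centralizer.  Regard
`D` as a module over `L ⊗[K] L` via `(l ⊗ l') • d = ι l * d * ι l'`.  Then `D` is a free
`(L ⊗[K] L)`-module of rank one, i.e. `D ≅ L ⊗[K] L` as an `L`-bimodule. -/
theorem division_algebra_free_over_subfield_env (K L D : Type) [Field K] [CharZero K]
    [DivisionRing D] [Algebra K D] [FiniteDimensional K D]
    (hcentral : Subalgebra.center K D = ⊥)
    [Field L] [Algebra K L] (ι : L →ₐ[K] D)
    (hmax : Subalgebra.centralizer K (ι.range : Set D) = ι.range) :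
    letI : Module (L ⊗[K] L) D := Module.compHom D (bimulAlgHom K L D ι).toRingHom
    Nonempty (D ≃ₗ[L ⊗[K] L] (L ⊗[K] L)) := by
  have : Algebra.IsCentral K D := ⟨hcentral.le⟩
  have : FiniteDimensional K L := .of_injective ι.toLinearMap ι.injective
  have := isSemisimpleRing_tensorProduct_self_of_isSeparable K L
  let _ : Module (L ⊗[K] L) D := Module.compHom D (bimulAlgHom K L D ι).toRingHom
  have : FaithfulSMul (L ⊗[K] L) D :=
    ⟨fun h => bimulAlgHom_injective ι ι.injective (LinearMap.ext h)⟩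
  have : IsScalarTower K (L ⊗[K] L) D :=
    ⟨fun k a d => congrArg (· d) (map_smul (bimulAlgHom K L D ι) k a)⟩
  obtain ⟨d₀, hd₀⟩ := exists_ker_toSpanSingleton_eq_bot_of_faithfulSMul (L ⊗[K] L) D
  let ψ := LinearMap.toSpanSingleton (L ⊗[K] L) D d₀
  have hinj : Function.Injective ψ := LinearMap.ker_eq_bot.mp hd₀
  have hdim : Module.finrank K (L ⊗[K] L) = Module.finrank K D := by
    refine (LinearMap.finrank_le_finrank_of_injective (f := ψ.restrictScalars K) hinj).antisymm ?_
    rw [Module.finrank_tensorProduct]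
    exact finrank_le_finrank_mul_finrank_of_centralizer_range_eq ι hmax
  have hsurj : Function.Surjective ψ :=
    (LinearMap.injective_iff_surjective_of_finrank_eq_finrank hdim
      (f := ψ.restrictScalars K)).mp hinj
  exact ⟨(LinearEquiv.ofBijective ψ ⟨hinj, hsurj⟩).symm⟩
end
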